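/- arXiv:2507.18246 — 4 statements merged into one kernel-verified Lean document; each statement's English description precedes it below -/
import Mathlib

section
/- Every dependency relation D on Σ gives rise to a distribution of Σ by sending each action a to the set of non-trivial maximal cliques of the graph of D containing a; this assignment cliques : Dep_Σ → Dist_Σ is a Galois insertion: it is order-preserving, has an order-preserving right adjoint (sending a distribution dev to the dependency relation {(a,b) : dev(a) ∩ dev(b) ≠ ∅}), and the composite right-adjoint-after-cliques is the identity on Dep_Σ up to equivalence. -/
/-- A distribution of `σ`: a type of devices together with an assignment of a set of
devices to each action. -/
structure Distn (σ : Type) where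
  Dev : Type
  dev : σ → Set Dev

/-- The preorder on distributions: `d ≤ d'` iff overlaps of device sets in `d` are
overlaps in `d'` (this is the relation `d' ≥ d` of the paper). -/
def Distn.Le {σ : Type} (d d' : Distn σ) : Prop :=
  ∀ a b : σ, (d.dev a ∩ d.dev b).Nonempty → (d'.dev a ∩ d'.dev b).Nonempty

/-- A clique of the graph of `D`: a set whose elements are pairwise related by `D`. -/
def IsCliqueOf {σ : Type} (D : σ → σ → Prop) (S : Set σ) : Prop :=
  ∀ a ∈ S, ∀ b ∈ S, D a b

/-- A maximal clique: a clique such that any vertex related to every member belongs to it. -/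
def IsMaxCliqueOf {σ : Type} (D : σ → σ → Prop) (S : Set σ) : Prop :=
  IsCliqueOf D S ∧ ∀ x : σ, (∀ y ∈ S, D x y) → x ∈ S

/-- The distribution obtained from a dependency relation: devices are the non-trivial
(non-singleton) maximal cliques of the graph of `D`, and each action is sent to the set
of such cliques containing it. -/
def cliquesDist {σ : Type} (D : σ → σ → Prop) : Distn σ where
  Dev := Set σ
  dev a := {S : Set σ | IsMaxCliqueOf D S ∧ (¬ ∃ x : σ, S = {x}) ∧ a ∈ S}

/-- The dependency relation underlying a distribution: `(a,b) ∈ D` iff `a = b` or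
`dev(a) ∩ dev(b) ≠ ∅` (the reflexive closure guarantees a dependency relation). -/
def Distn.toDep {σ : Type} (d : Distn σ) : σ → σ → Prop :=
  fun a b => a = b ∨ (d.dev a ∩ d.dev b).Nonempty

/-! Maximal cliques exist by Zorn's lemma, so `D a b` with `a ≠ b` produces a non-trivial
maximal clique containing both `a` and `b`; conversely, a clique containing both forces
`D a b`. Hence `toDep (cliquesDist D) = D`. A device of `cliquesDist D` is a non-trivial
clique, so it is shared by two distinct actions; for such distributions the order `≤` is
determined by the induced dependency relations, which makes `cliquesDist` left adjoint to
`toDep`. -/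

namespace Distn

variable {σ : Type}

def NoPrivateDevice (d : Distn σ) : Prop :=
  ∀ a, ∀ z ∈ d.dev a, ∃ b ≠ a, z ∈ d.dev b

theorem toDep_mono {d d' : Distn σ} (h : d.Le d') {a b : σ} : d.toDep a b → d'.toDep a b :=
  Or.imp_right (h a b)

theorem NoPrivateDevice.le_iff {d : Distn σ} (hd : d.NoPrivateDevice) (e : Distn σ) :
    d.Le e ↔ ∀ a b, d.toDep a b → e.toDep a b := by
  refine ⟨fun h a b => toDep_mono h, fun h a b ⟨z, hza, hzb⟩ => ?_⟩
  by_cases hab : a = b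
  · subst hab
    obtain ⟨c, hca, hzc⟩ := hd a z hza
    obtain ⟨w, hwa, -⟩ := (h a c (.inr ⟨z, hza, hzc⟩)).resolve_left hca.symm
    exact ⟨w, hwa, hwa⟩
  · exact (h a b (.inr ⟨z, hza, hzb⟩)).resolve_left hab

end Distn

section

variable {σ : Type} {D : σ → σ → Prop}

theorem isCliqueOf_singleton (hr : Reflexive D) (a : σ) : IsCliqueOf D {a} := by
  rintro x rfl y rfl
  exact hr _

theorem IsCliqueOf.insert (hr : Reflexive D) (hs : Symmetric D) {S : Set σ}
    (hS : IsCliqueOf D S) {x : σ} (hx : ∀ y ∈ S, D x y) : IsCliqueOf D (insert x S) := by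
  rintro a (rfl | ha) b (rfl | hb)
  · exact hr _
  · exact hx b hb
  · exact hs (hx a ha)
  · exact hS a ha b hb

theorem isCliqueOf_sUnion_of_isChain {c : Set (Set σ)} (hc : ∀ S ∈ c, IsCliqueOf D S)
    (hchain : IsChain (· ⊆ ·) c) : IsCliqueOf D (⋃₀ c) := by
  rintro a ⟨S, hS, haS⟩ b ⟨T, hT, hbT⟩
  rcases hchain.total hS hT with h | h
  · exact hc T hT a (h haS) b hbT
  · exact hc S hS a haS b (h hbT)

theorem IsCliqueOf.exists_isMaxCliqueOf_superset (hr : Reflexive D) (hs : Symmetric D)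
    {S : Set σ} (hS : IsCliqueOf D S) : ∃ T, S ⊆ T ∧ IsMaxCliqueOf D T := by
  obtain ⟨T, hST, hT⟩ := zorn_subset_nonempty {U | IsCliqueOf D U}
    (fun c hc hchain _ => ⟨⋃₀ c, isCliqueOf_sUnion_of_isChain hc hchain,
      fun _ => Set.subset_sUnion_of_mem⟩) S hS
  exact ⟨T, hST, hT.prop, fun x hx => hT.mem_of_prop_insert (hT.prop.insert hr hs hx)⟩

theorem mem_dev_cliquesDist_iff {S : Set σ} {a : σ} :
    S ∈ (cliquesDist D).dev a ↔ IsMaxCliqueOf D S ∧ S.Nontrivial ∧ a ∈ S := by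
  refine and_congr_right fun _ => ⟨fun ⟨hS, ha⟩ => ⟨?_, ha⟩, fun ⟨hS, ha⟩ => ⟨?_, ha⟩⟩
  · rw [Set.exists_eq_singleton_iff_nonempty_subsingleton, not_and] at hS
    exact Set.not_subsingleton_iff.mp (hS ⟨a, ha⟩)
  · rintro ⟨x, rfl⟩
    exact Set.not_nontrivial_singleton hS

theorem noPrivateDevice_cliquesDist : (cliquesDist D).NoPrivateDevice := by
  intro a S hS
  obtain ⟨hmax, hnt, -⟩ := mem_dev_cliquesDist_iff.mp hS
  obtain ⟨b, hb, hba⟩ := hnt.exists_ne a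
  exact ⟨b, hba, mem_dev_cliquesDist_iff.mpr ⟨hmax, hnt, hb⟩⟩

theorem toDep_cliquesDist_iff (hr : Reflexive D) (hs : Symmetric D) {a b : σ} :
    (cliquesDist D).toDep a b ↔ D a b := by
  constructor
  · rintro (rfl | ⟨S, ⟨hmax, -, ha⟩, -, -, hb⟩)
    · exact hr a
    · exact hmax.1 a ha b hb
  · intro hab
    refine or_iff_not_imp_left.mpr fun hne => ?_
    have hpair : IsCliqueOf D {a, b} :=
      (isCliqueOf_singleton hr b).insert hr hs (by rintro y rfl; exact hab)
    obtain ⟨T, hsub, hT⟩ := hpair.exists_isMaxCliqueOf_superset hr hs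
    have hnt : T.Nontrivial := ⟨a, hsub (.inl rfl), b, hsub (.inr rfl), hne⟩
    exact ⟨T, mem_dev_cliquesDist_iff.mpr ⟨hT, hnt, hsub (.inl rfl)⟩,
      mem_dev_cliquesDist_iff.mpr ⟨hT, hnt, hsub (.inr rfl)⟩⟩

theorem cliquesDist_le_iff (hr : Reflexive D) (hs : Symmetric D) (e : Distn σ) :
    (cliquesDist D).Le e ↔ ∀ a b, D a b → e.toDep a b := by
  simp only [noPrivateDevice_cliquesDist.le_iff, toDep_cliquesDist_iff hr hs]

end

/-- `cliques : Dep_σ → Dist_σ` is order-preserving, has an order-preserving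
right adjoint `Distn.toDep`, and the composite `toDep ∘ cliques` is the identity on
dependency relations (up to equivalence, here: pointwise iff). -/
theorem cliques_galois_insertion (σ : Type) :
    (∀ D D' : σ → σ → Prop, Reflexive D → Symmetric D → Reflexive D' → Symmetric D' →
      (∀ a b : σ, D a b → D' a b) → Distn.Le (cliquesDist D) (cliquesDist D')) ∧
    (∀ d d' : Distn σ, Distn.Le d d' → ∀ a b : σ, d.toDep a b → d'.toDep a b) ∧
    (∀ D : σ → σ → Prop, Reflexive D → Symmetric D → ∀ e : Distn σ,
      (Distn.Le (cliquesDist D) e ↔ ∀ a b : σ, D a b → e.toDep a b)) ∧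
    (∀ D : σ → σ → Prop, Reflexive D → Symmetric D →
      ∀ a b : σ, (cliquesDist D).toDep a b ↔ D a b) := by
  refine ⟨fun D D' hr hs hr' hs' hDD' => ?_, fun _ _ h _ _ => Distn.toDep_mono h,
    fun _ hr hs => cliquesDist_le_iff hr hs, fun _ hr hs _ _ => toDep_cliquesDist_iff hr hs⟩
  rw [cliquesDist_le_iff hr hs]
  exact fun a b hab => (toDep_cliquesDist_iff hr' hs').mpr (hDD' a b hab)
end

section
/- In the free premonoidal category FG over a device graph G, with devices of morphisms defined inductively (identities have no devices, whiskered generators have their generating devices, composites have the union), any two morphisms f, g with disjoint device sets interchange: f ∥ g and g ∥ f. -/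
/-- A device graph over a set of objects `V`: arrows with source/target lists of
objects, a set of devices, and a device assignment. -/
structure DevGraph (V : Type) where
  E : Type
  src : E → List V
  tgt : E → List V
  Dev : Type
  dev : E → Set Dev

/-- Formal morphisms of the free premonoidal category over a device graph: identities,
whiskered generators `X ▷ e ◁ Y`, and composites.  (The source/target of a whiskered
generator is recorded via explicit equality proofs.) -/
inductive Expr {V : Type} (G : DevGraph V) : List V → List V → Type
  | id (X : List V) : Expr G X X
  | gen (X Y : List V) (e : G.E) {S T : List V}
      (hS : S = X ++ G.src e ++ Y) (hT : T = X ++ G.tgt e ++ Y) : Expr G S T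
  | comp {X Y Z : List V} : Expr G X Y → Expr G Y Z → Expr G X Z

/-- The inductive extension of the device assignment to formal morphisms. -/
def Expr.devOf {V : Type} {G : DevGraph V} : ∀ {X Y : List V}, Expr G X Y → Set G.Dev
  | _, _, .id _ => ∅
  | _, _, .gen _ _ e _ _ => G.dev e
  | _, _, .comp f g => f.devOf ∪ g.devOf

/-- Left whiskering of formal morphisms. -/
def Expr.lw {V : Type} {G : DevGraph V} (A : List V) :
    ∀ {X Y : List V}, Expr G X Y → Expr G (A ++ X) (A ++ Y)
  | _, _, .id X => .id (A ++ X)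
  | _, _, .gen X Y e hS hT =>
      .gen (A ++ X) Y e (by subst hS; simp [List.append_assoc])
        (by subst hT; simp [List.append_assoc])
  | _, _, .comp f g => .comp (f.lw A) (g.lw A)

/-- Right whiskering of formal morphisms. -/
def Expr.rw {V : Type} {G : DevGraph V} (A : List V) :
    ∀ {X Y : List V}, Expr G X Y → Expr G (X ++ A) (Y ++ A)
  | _, _, .id X => .id (X ++ A)
  | _, _, .gen X Y e hS hT =>
      .gen X (Y ++ A) e (by subst hS; simp [List.append_assoc])
        (by subst hT; simp [List.append_assoc])
  | _, _, .comp f g => .comp (f.rw A) (g.rw A)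

/-- The congruence on formal morphisms: the least congruence for composition containing
the category laws and interchange of (whiskerings of) orthogonal generators. -/
inductive ERel {V : Type} (G : DevGraph V) : ∀ {X Y : List V}, Expr G X Y → Expr G X Y → Prop
  | refl {X Y : List V} (f : Expr G X Y) : ERel G f f
  | symm {X Y : List V} {f g : Expr G X Y} : ERel G f g → ERel G g f
  | trans {X Y : List V} {f g h : Expr G X Y} : ERel G f g → ERel G g h → ERel G f h
  | compCongr {X Y Z : List V} {f f' : Expr G X Y} {g g' : Expr G Y Z} :
      ERel G f f' → ERel G g g' → ERel G (f.comp g) (f'.comp g')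
  | assoc {W X Y Z : List V} (f : Expr G W X) (g : Expr G X Y) (h : Expr G Y Z) :
      ERel G ((f.comp g).comp h) (f.comp (g.comp h))
  | idLeft {X Y : List V} (f : Expr G X Y) : ERel G ((Expr.id X).comp f) f
  | idRight {X Y : List V} (f : Expr G X Y) : ERel G (f.comp (Expr.id Y)) f
  | interchange (e e' : G.E) (horth : G.dev e ∩ G.dev e' = ∅)
      (X Y Z : List V) {S M M' T : List V}
      (h1 : S = X ++ G.src e ++ (Y ++ G.src e' ++ Z))
      (h2 : M = X ++ G.tgt e ++ (Y ++ G.src e' ++ Z))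
      (h3 : M = (X ++ G.tgt e ++ Y) ++ G.src e' ++ Z)
      (h4 : T = (X ++ G.tgt e ++ Y) ++ G.tgt e' ++ Z)
      (h5 : S = (X ++ G.src e ++ Y) ++ G.src e' ++ Z)
      (h6 : M' = (X ++ G.src e ++ Y) ++ G.tgt e' ++ Z)
      (h7 : M' = X ++ G.src e ++ (Y ++ G.tgt e' ++ Z))
      (h8 : T = X ++ G.tgt e ++ (Y ++ G.tgt e' ++ Z)) :
      ERel G ((Expr.gen X (Y ++ G.src e' ++ Z) e h1 h2).comp
               (Expr.gen (X ++ G.tgt e ++ Y) Z e' h3 h4))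
            ((Expr.gen (X ++ G.src e ++ Y) Z e' h5 h6).comp
               (Expr.gen X (Y ++ G.tgt e' ++ Z) e h7 h8))

/-- Interchange (one direction) of formal morphisms in the free premonoidal category:
the two whiskered composites are related by the congruence. -/
def parE {V : Type} {G : DevGraph V} {X Y X' Y' : List V}
    (f : Expr G X Y) (g : Expr G X' Y') : Prop :=
  ERel G ((f.rw X').comp (g.lw Y)) ((g.lw X).comp (f.rw Y'))

instance exprSetoid {V : Type} (G : DevGraph V) (X Y : List V) : Setoid (Expr G X Y) :=
  ⟨ERel G, ⟨ERel.refl, ERel.symm, ERel.trans⟩⟩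

/-- Hom-sets of the free premonoidal category: formal morphisms modulo the congruence. -/
def HomQ {V : Type} (G : DevGraph V) (X Y : List V) : Type :=
  Quotient (exprSetoid G X Y)

/-! Interchange is preserved by composition in either argument and holds trivially against
identities, so a structural induction on both morphisms reduces the claim to two whiskered
generators, where it is the interchange equation of the congruence after reassociating the
whiskering contexts. -/

section Interchange

variable {V : Type} {G : DevGraph V} {X Y Z X' Y' Z' : List V}

theorem parE_id_left (g : Expr G X' Y') : parE (Expr.id X) g :=
  (ERel.idLeft _).trans (ERel.idRight _).symm

theorem parE_id_right (f : Expr G X Y) : parE f (Expr.id X') :=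
  (ERel.idRight _).trans (ERel.idLeft _).symm

theorem parE.comp_left {f₁ : Expr G X Y} {f₂ : Expr G Y Z} {g : Expr G X' Y'}
    (h₁ : parE f₁ g) (h₂ : parE f₂ g) : parE (f₁.comp f₂) g :=
  (ERel.assoc _ _ _).trans <|
    (ERel.compCongr (ERel.refl _) h₂).trans <|
      (ERel.assoc _ _ _).symm.trans <|
        (ERel.compCongr h₁ (ERel.refl _)).trans (ERel.assoc _ _ _)

theorem parE.comp_right {f : Expr G X Y} {g₁ : Expr G X' Y'} {g₂ : Expr G Y' Z'}
    (h₁ : parE f g₁) (h₂ : parE f g₂) : parE f (g₁.comp g₂) :=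
  (ERel.assoc _ _ _).symm.trans <|
    (ERel.compCongr h₁ (ERel.refl _)).trans <|
      (ERel.assoc _ _ _).trans <|
        (ERel.compCongr (ERel.refl _) h₂).trans (ERel.assoc _ _ _).symm

theorem parE_gen_gen {A B A' B' S T S' T' : List V} {e e' : G.E}
    (hS : S = A ++ G.src e ++ B) (hT : T = A ++ G.tgt e ++ B)
    (hS' : S' = A' ++ G.src e' ++ B') (hT' : T' = A' ++ G.tgt e' ++ B')
    (horth : G.dev e ∩ G.dev e' = ∅) :
    parE (Expr.gen A B e hS hT) (Expr.gen A' B' e' hS' hT') := by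
  simp only [parE, Expr.rw, Expr.lw]
  convert ERel.interchange e e' horth A (B ++ A') B' (S := S ++ S') (M := T ++ S')
    (M' := S ++ T') (T := T ++ T') ?_ ?_ ?_ ?_ ?_ ?_ ?_ ?_ using 2 <;>
    simp [hS, hT, hS', hT']

theorem parE_of_devOf_inter_eq_empty (f : Expr G X Y) (g : Expr G X' Y')
    (h : f.devOf ∩ g.devOf = ∅) : parE f g := by
  induction f with
  | id => exact parE_id_left g
  | comp f₁ f₂ ih₁ ih₂ =>
    simp only [Expr.devOf, Set.union_inter_distrib_right, Set.union_empty_iff] at h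
    exact (ih₁ h.1).comp_left (ih₂ h.2)
  | gen A B e hS hT =>
    induction g with
    | id => exact parE_id_right _
    | comp g₁ g₂ ih₁ ih₂ =>
      simp only [Expr.devOf, Set.inter_union_distrib_left, Set.union_empty_iff] at h
      exact (ih₁ h.1).comp_right (ih₂ h.2)
    | gen A' B' e' hS' hT' => exact parE_gen_gen hS hT hS' hT' h

end Interchange

/-- in the free premonoidal category over a device graph `G`, any two
morphisms with disjoint device sets interchange. -/
theorem orthogonal_morphisms_interchange {V : Type} (G : DevGraph V)
    {X Y X' Y' : List V} (f : Expr G X Y) (g : Expr G X' Y')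
    (h : f.devOf ∩ g.devOf = ∅) : parE f g ∧ parE g f :=
  ⟨parE_of_devOf_inter_eq_empty f g h,
    parE_of_devOf_inter_eq_empty g f (Set.inter_comm _ _ ▸ h)⟩
end

section
/- Every morphism of device graphs α : G → H induces a strict premonoidal functor F(α) : FG → FH acting as α_V* on objects (lists) and defined on morphisms by structural recursion (identities to identities, whiskered generators to whiskered images of generators, composites to composites); this assignment is well-defined on equivalence classes, preserves whiskerings, and is functorial: F(id) = id and F(β ∘ α) = F(β) ∘ F(α). -/
/-- A morphism of device graphs: maps on objects, arrows, commuting with sources and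
targets, and preserving orthogonality (disjointness of device sets). -/
structure DevHom {V W : Type} (G : DevGraph V) (H : DevGraph W) where
  onV : V → W
  onE : G.E → H.E
  src_comm : ∀ e : G.E, H.src (onE e) = (G.src e).map onV
  tgt_comm : ∀ e : G.E, H.tgt (onE e) = (G.tgt e).map onV
  orth : ∀ f g : G.E, G.dev f ∩ G.dev g = ∅ → H.dev (onE f) ∩ H.dev (onE g) = ∅

/-- The action of a morphism of device graphs on formal morphisms of the free
premonoidal categories, defined by structural recursion. -/
def mapExpr {V W : Type} {G : DevGraph V} {H : DevGraph W} (α : DevHom G H) :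
    ∀ {X Y : List V}, Expr G X Y → Expr H (X.map α.onV) (Y.map α.onV)
  | _, _, .id X => .id (X.map α.onV)
  | _, _, .gen X Y e hS hT =>
      .gen (X.map α.onV) (Y.map α.onV) (α.onE e)
        (by subst hS; simp [α.src_comm]) (by subst hT; simp [α.tgt_comm])
  | _, _, .comp f g => .comp (mapExpr α f) (mapExpr α g)

/-- The identity morphism of device graphs. -/
def DevHom.idH {V : Type} (G : DevGraph V) : DevHom G G where
  onV := id
  onE := id
  src_comm := by intro e; simp
  tgt_comm := by intro e; simp
  orth := fun _ _ h => h

/-- Composition of morphisms of device graphs. -/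
def DevHom.compH {V W U : Type} {G : DevGraph V} {H : DevGraph W} {K : DevGraph U}
    (α : DevHom G H) (β : DevHom H K) : DevHom G K where
  onV := β.onV ∘ α.onV
  onE := β.onE ∘ α.onE
  src_comm := by intro e; simp [β.src_comm, α.src_comm, List.map_map]
  tgt_comm := by intro e; simp [β.tgt_comm, α.tgt_comm, List.map_map]
  orth := fun f g h => β.orth _ _ (α.orth _ _ h)

/-!
Everything is proved by structural induction: on the derivation of `ERel` for
well-definedness, on the formal expression for the other equations. The only
generator of the congruence with content is interchange, which is sent to interchange
because `α` preserves orthogonality. The object indices on the two sides agree only up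
to `List.map_append`, whence the heterogeneous congruence lemmas for the constructors.
-/

namespace Expr

variable {V : Type} {G : DevGraph V}

theorem id_heq_id {X X' : List V} (h : X = X') :
    HEq (Expr.id (G := G) X) (Expr.id (G := G) X') := by
  subst h; rfl

theorem gen_heq_gen {X Y X' Y' S T S' T' : List V} (e : G.E)
    (hS : S = X ++ G.src e ++ Y) (hT : T = X ++ G.tgt e ++ Y)
    (hS' : S' = X' ++ G.src e ++ Y') (hT' : T' = X' ++ G.tgt e ++ Y')
    (hX : X = X') (hY : Y = Y') :
    HEq (Expr.gen (G := G) X Y e hS hT) (Expr.gen X' Y' e hS' hT') := by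
  subst hX hY hS hS' hT hT'; rfl

theorem comp_heq_comp {X Y Z X' Y' Z' : List V} (hX : X = X') (hY : Y = Y') (hZ : Z = Z')
    {f : Expr G X Y} {f' : Expr G X' Y'} {g : Expr G Y Z} {g' : Expr G Y' Z'}
    (hf : HEq f f') (hg : HEq g g') : HEq (f.comp g) (f'.comp g') := by
  subst hX hY hZ; cases hf; cases hg; rfl

end Expr

namespace DevHom

@[simp]
theorem idH_onV {V : Type} (G : DevGraph V) : (idH G).onV = id := rfl

@[simp]
theorem compH_onV {V W U : Type} {G : DevGraph V} {H : DevGraph W} {K : DevGraph U}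
    (α : DevHom G H) (β : DevHom H K) : (α.compH β).onV = β.onV ∘ α.onV := rfl

end DevHom

section mapExpr

variable {V W : Type} {G : DevGraph V} {H : DevGraph W}

theorem ERel.map (α : DevHom G H) {X Y : List V} {f g : Expr G X Y}
    (h : ERel G f g) : ERel H (mapExpr α f) (mapExpr α g) := by
  induction h with
  | refl => exact .refl _
  | symm _ ih => exact .symm ih
  | trans _ _ ih₁ ih₂ => exact .trans ih₁ ih₂
  | compCongr _ _ ih₁ ih₂ => exact .compCongr ih₁ ih₂
  | assoc => exact .assoc _ _ _
  | idLeft => exact .idLeft _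
  | idRight => exact .idRight _
  | @interchange e e' horth X Y Z S M M' T h₁ h₂ h₃ h₄ h₅ h₆ h₇ h₈ =>
    simp only [mapExpr]
    convert ERel.interchange (α.onE e) (α.onE e') (α.orth _ _ horth)
      (X.map α.onV) (Y.map α.onV) (Z.map α.onV) (S := S.map α.onV) (M := M.map α.onV)
      (M' := M'.map α.onV) (T := T.map α.onV) ?_ ?_ ?_ ?_ ?_ ?_ ?_ ?_ using 3 <;>
      simp [*, α.src_comm, α.tgt_comm]

theorem mapExpr_lw (α : DevHom G H) (A : List V) {X Y : List V} (f : Expr G X Y) :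
    HEq (mapExpr α (f.lw A)) ((mapExpr α f).lw (A.map α.onV)) := by
  induction f with
  | id => exact Expr.id_heq_id (by simp)
  | gen => exact Expr.gen_heq_gen _ _ _ _ _ (by simp) rfl
  | comp _ _ ihf ihg => exact Expr.comp_heq_comp (by simp) (by simp) (by simp) ihf ihg

theorem mapExpr_rw (α : DevHom G H) (A : List V) {X Y : List V} (f : Expr G X Y) :
    HEq (mapExpr α (f.rw A)) ((mapExpr α f).rw (A.map α.onV)) := by
  induction f with
  | id => exact Expr.id_heq_id (by simp)
  | gen => exact Expr.gen_heq_gen _ _ _ _ _ rfl (by simp)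
  | comp _ _ ihf ihg => exact Expr.comp_heq_comp (by simp) (by simp) (by simp) ihf ihg

theorem mapExpr_idH {X Y : List V} (f : Expr G X Y) : HEq (mapExpr (DevHom.idH G) f) f := by
  induction f with
  | id => exact Expr.id_heq_id (by simp)
  | gen => exact Expr.gen_heq_gen _ _ _ _ _ (by simp) (by simp)
  | comp _ _ ihf ihg => exact Expr.comp_heq_comp (by simp) (by simp) (by simp) ihf ihg

theorem mapExpr_compH {U : Type} {K : DevGraph U} (α : DevHom G H) (β : DevHom H K)
    {X Y : List V} (f : Expr G X Y) :
    HEq (mapExpr (α.compH β) f) (mapExpr β (mapExpr α f)) := by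
  induction f with
  | id => exact Expr.id_heq_id (by simp)
  | gen => exact Expr.gen_heq_gen _ _ _ _ _ (by simp) (by simp)
  | comp _ _ ihf ihg => exact Expr.comp_heq_comp (by simp) (by simp) (by simp) ihf ihg

end mapExpr

/-- every morphism of device graphs `α : G → H` induces a strict
premonoidal functor `F(α) : FG → FH`: its action on morphisms is well defined on
equivalence classes, preserves whiskerings, and the assignment is functorial
(preserving identities and composition).  Equations between morphisms whose types
agree only propositionally are stated with `HEq`. -/
theorem free_premonoidal_functorial {V W U : Type}
    (G : DevGraph V) (H : DevGraph W) (K : DevGraph U) :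
    (∀ (α : DevHom G H) {X Y : List V} (f g : Expr G X Y),
      ERel G f g → ERel H (mapExpr α f) (mapExpr α g)) ∧
    (∀ (α : DevHom G H) (A : List V) {X Y : List V} (f : Expr G X Y),
      HEq (mapExpr α (f.lw A)) ((mapExpr α f).lw (A.map α.onV))) ∧
    (∀ (α : DevHom G H) (A : List V) {X Y : List V} (f : Expr G X Y),
      HEq (mapExpr α (f.rw A)) ((mapExpr α f).rw (A.map α.onV))) ∧
    (∀ {X Y : List V} (f : Expr G X Y), HEq (mapExpr (DevHom.idH G) f) f) ∧
    (∀ (α : DevHom G H) (β : DevHom H K) {X Y : List V} (f : Expr G X Y),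
      HEq (mapExpr (α.compH β) f) (mapExpr β (mapExpr α f))) :=
  ⟨fun α _ _ _ _ h => h.map α, mapExpr_lw, mapExpr_rw, mapExpr_idH, mapExpr_compH⟩
end

section
/- If a device graph G has an empty set of objects, then the free premonoidal category FG has a single object (the empty list), and its endomorphism monoid is isomorphic (as a monoid) to the trace monoid over the dependency relation induced by the distribution: (a,b) ∈ D iff dev(a) ∩ dev(b) ≠ ∅. -/
/-- The endomorphism monoid of the (unique) object of `FG` when `G` has no objects. -/
instance endMonoid {V : Type} (G : DevGraph V) : Monoid (HomQ G [] []) where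
  one := ⟦Expr.id []⟧
  mul := Quotient.map₂ Expr.comp (fun _ _ h _ _ h' => ERel.compCongr h h')
  mul_assoc a b c := by
    induction a using Quotient.inductionOn
    induction b using Quotient.inductionOn
    induction c using Quotient.inductionOn
    exact Quotient.sound (ERel.assoc _ _ _)
  one_mul a := by
    induction a using Quotient.inductionOn
    exact Quotient.sound (ERel.idLeft _)
  mul_one a := by
    induction a using Quotient.inductionOn
    exact Quotient.sound (ERel.idRight _)

/-- The generating relation for the trace congruence: `ab ~ ba` for independent `a,b`. -/
def traceRel (σ : Type) (D : σ → σ → Prop) : FreeMonoid σ → FreeMonoid σ → Prop :=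
  fun x y => ∃ a b : σ, ¬ D a b ∧ x = FreeMonoid.of a * FreeMonoid.of b ∧
    y = FreeMonoid.of b * FreeMonoid.of a

/-- The trace congruence `≡_D`. -/
def traceCon (σ : Type) (D : σ → σ → Prop) : Con (FreeMonoid σ) :=
  conGen (traceRel σ D)

/-! Reading off the word of generators of a formal morphism respects the congruence: the
category laws become monoid laws and interchange of orthogonal generators becomes a trace
commutation. Without objects every whiskering is trivial, so conversely sending each letter to
its generator turns every trace commutation into an instance of interchange. On the quotients
the two maps are mutually inverse, since a formal morphism is the composite of its generators. -/

abbrev DevGraph.Dep {V : Type} (G : DevGraph V) (a b : G.E) : Prop :=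
  (G.dev a ∩ G.dev b).Nonempty

namespace Expr

variable {V : Type} {G : DevGraph V}

def word : ∀ {X Y : List V}, Expr G X Y → FreeMonoid G.E
  | _, _, .id _ => 1
  | _, _, .gen _ _ e _ _ => FreeMonoid.of e
  | _, _, .comp f g => f.word * g.word

theorem traceCon_word_of_eRel {X Y : List V} {f g : Expr G X Y} (h : ERel G f g) :
    traceCon G.E G.Dep f.word g.word := by
  induction h with
  | refl f => exact (traceCon G.E G.Dep).refl _
  | symm _ ih => exact (traceCon G.E G.Dep).symm ih
  | trans _ _ ih₁ ih₂ => exact (traceCon G.E G.Dep).trans ih₁ ih₂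
  | compCongr _ _ ih₁ ih₂ => exact (traceCon G.E G.Dep).mul ih₁ ih₂
  | assoc => simpa only [word, mul_assoc] using (traceCon G.E G.Dep).refl _
  | idLeft => simpa only [word, one_mul] using (traceCon G.E G.Dep).refl _
  | idRight => simpa only [word, mul_one] using (traceCon G.E G.Dep).refl _
  | interchange e e' horth =>
      exact ConGen.Rel.of _ _ ⟨e, e', Set.not_nonempty_iff_eq_empty.mpr horth, rfl, rfl⟩

variable [IsEmpty V]

def castNil {X Y : List V} (f : Expr G X Y) : Expr G [] [] :=
  cast (by rw [Subsingleton.elim X [], Subsingleton.elim Y []]) f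

theorem castNil_eq (f : Expr G [] []) : f.castNil = f := rfl

def genNil (e : G.E) : Expr G [] [] :=
  .gen [] [] e (Subsingleton.elim _ _) (Subsingleton.elim _ _)

theorem gen_eq_genNil {X Y : List V} (e : G.E) (hS : [] = X ++ G.src e ++ Y)
    (hT : [] = X ++ G.tgt e ++ Y) : Expr.gen X Y e hS hT = genNil e := by
  obtain rfl : X = [] := Subsingleton.elim _ _
  obtain rfl : Y = [] := Subsingleton.elim _ _
  rfl

end Expr

namespace HomQ

variable {V : Type} {G : DevGraph V}

def toTrace : HomQ G [] [] →* (traceCon G.E G.Dep).Quotient where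
  toFun := Quotient.lift (fun f => (f.word : (traceCon G.E G.Dep).Quotient))
    (fun _ _ h => (Con.eq _).mpr (Expr.traceCon_word_of_eRel h))
  map_one' := rfl
  map_mul' p q := by
    induction p using Quotient.inductionOn
    induction q using Quotient.inductionOn
    rfl

variable [IsEmpty V]

def ofWord : FreeMonoid G.E →* HomQ G [] [] :=
  FreeMonoid.lift fun e => ⟦Expr.genNil e⟧

theorem ofWord_of_mul_of_comm {a b : G.E} (hab : ¬ G.Dep a b) :
    ofWord (.of a * .of b : FreeMonoid G.E) = ofWord (.of b * .of a) := by
  have h := ERel.interchange (G := G) a b (Set.not_nonempty_iff_eq_empty.mp hab) [] [] []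
    (S := []) (M := []) (M' := []) (T := [])
    (Subsingleton.elim _ _) (Subsingleton.elim _ _) (Subsingleton.elim _ _)
    (Subsingleton.elim _ _) (Subsingleton.elim _ _) (Subsingleton.elim _ _)
    (Subsingleton.elim _ _) (Subsingleton.elim _ _)
  simp only [Expr.gen_eq_genNil] at h
  rw [map_mul, map_mul]
  exact Quotient.sound h

theorem traceCon_le_ker_ofWord : traceCon G.E G.Dep ≤ Con.ker (ofWord (G := G)) :=
  Con.conGen_le.mpr fun _ _ ⟨_, _, hab, hx, hy⟩ =>
    (Con.ker_rel _).mpr (hx ▸ hy ▸ ofWord_of_mul_of_comm hab)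

def ofTrace : (traceCon G.E G.Dep).Quotient →* HomQ G [] [] :=
  Con.lift _ ofWord traceCon_le_ker_ofWord

theorem ofWord_word {X Y : List V} (f : Expr G X Y) : ofWord f.word = ⟦f.castNil⟧ := by
  induction f with
  | id X =>
      obtain rfl : X = [] := Subsingleton.elim _ _
      rfl
  | @gen X Y e S T hS hT =>
      obtain rfl : S = [] := Subsingleton.elim _ _
      obtain rfl : T = [] := Subsingleton.elim _ _
      rw [Expr.castNil_eq, Expr.gen_eq_genNil]
      exact FreeMonoid.lift_eval_of _ e
  | @comp X Y Z f g ihf ihg =>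
      obtain rfl : X = [] := Subsingleton.elim _ _
      obtain rfl : Y = [] := Subsingleton.elim _ _
      obtain rfl : Z = [] := Subsingleton.elim _ _
      rw [Expr.word, map_mul, ihf, ihg]
      rfl

theorem toTrace_ofWord (w : FreeMonoid G.E) :
    toTrace (ofWord w) = (w : (traceCon G.E G.Dep).Quotient) := by
  induction w using FreeMonoid.inductionOn with
  | one => rfl
  | of a => rfl
  | mul x y ihx ihy => rw [map_mul, map_mul, ihx, ihy, Con.coe_mul]

def traceEquiv : (traceCon G.E G.Dep).Quotient ≃* HomQ G [] [] where
  toFun := ofTrace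
  invFun := toTrace
  left_inv x := Con.induction_on x toTrace_ofWord
  right_inv q := Quotient.inductionOn q ofWord_word
  map_mul' := map_mul ofTrace

end HomQ

/-- if a device graph `G` has an empty set of objects (i.e. it is a
distribution of the alphabet `E_G`), then the free premonoidal category `FG` has a
single object (the empty list), and its endomorphism monoid is isomorphic, as a monoid,
to the trace monoid over the dependency relation `(a,b) ∈ D ↔ dev(a) ∩ dev(b) ≠ ∅`. -/
theorem free_premonoidal_on_distribution_is_trace_monoid {V : Type}
    (G : DevGraph V) (hV : IsEmpty V) :
    Subsingleton (List V) ∧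
    Nonempty ((traceCon G.E (fun a b => (G.dev a ∩ G.dev b).Nonempty)).Quotient
      ≃* HomQ G [] []) :=
  ⟨inferInstance, ⟨HomQ.traceEquiv⟩⟩
end
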